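/- arXiv:2004.01626 — 2 statements merged into one kernel-verified Lean document; each statement's English description precedes it below -/
import Mathlib

section
/- Let n ≥ 1, let V ⊆ ℝⁿ be a k-dimensional linear subspace and α, β ∈ (0,∞). Then for every a ∈ ℝⁿ the set S_{V,α,β} ∩ (V + a) is bounded; moreover, there exists ε > 0 such that for every k-dimensional linear subspace W ⊆ ℝⁿ whose orthogonal projection satisfies ‖Π_W − Π_V‖ < ε (operator norm) and every a ∈ ℝⁿ, the set S_{V,α,β} ∩ (W + a) is bounded. -/
open MeasureTheory Metric Set
open scoped ENNReal NNReal

noncomputable section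

/-- The cone `K_{V,α,β} = {ξ : |Π_V ξ| ≥ α and |ξ − Π_V ξ| ≤ β |Π_V ξ|}`. -/
def coneK {n : ℕ} (V : Submodule ℝ (EuclideanSpace ℝ (Fin n))) (α β : ℝ) :
    Set (EuclideanSpace ℝ (Fin n)) :=
  {ξ | α ≤ ‖(V.orthogonalProjectionOnto ξ : EuclideanSpace ℝ (Fin n))‖ ∧
    ‖ξ - (V.orthogonalProjectionOnto ξ : EuclideanSpace ℝ (Fin n))‖ ≤
      β * ‖(V.orthogonalProjectionOnto ξ : EuclideanSpace ℝ (Fin n))‖}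

/-- Fourier transform of the complex measure `μ = f·ν`:
`μ̂(ξ) = ∫ e^{−2πi⟨ξ,x⟩} f(x) dν(x)`. -/
def fourierOf {n : ℕ} (ν : Measure (EuclideanSpace ℝ (Fin n)))
    (f : EuclideanSpace ℝ (Fin n) → ℂ) (ξ : EuclideanSpace ℝ (Fin n)) : ℂ :=
  ∫ x, Complex.exp (-2 * Real.pi * Complex.I * ((inner ℝ ξ x : ℝ) : ℂ)) * f x ∂ν


/-- The orthogonal projection onto `W`, as a continuous linear map `ℝⁿ → ℝⁿ`. -/
def projCL {n : ℕ} (W : Submodule ℝ (EuclideanSpace ℝ (Fin n))) :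
    EuclideanSpace ℝ (Fin n) →L[ℝ] EuclideanSpace ℝ (Fin n) :=
  W.subtypeL.comp W.orthogonalProjectionOnto


/-! Far from the origin, a point `x = w + a` with `w ∈ W` is at distance at most
`‖a‖ + ‖Π_W - Π_V‖ ‖x‖` from `V`, since it is at distance at most `‖a‖` from `W`. Once
`‖Π_W - Π_V‖ ≤ β / (2 (1 + β))`, this distance is a small fraction of `‖x‖` plus a constant, so
`‖Π_V x‖` grows linearly in `‖x‖` and dominates `‖x - Π_V x‖ / β`: every far point of `W + a`
lies in `K_{V,α,β}`. -/

section Projection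

variable {E : Type*} [NormedAddCommGroup E] [InnerProductSpace ℝ E]

theorem Submodule.norm_add_sub_starProjection_add_le (K : Submodule ℝ E)
    [K.HasOrthogonalProjection] {w : E} (hw : w ∈ K) (a : E) :
    ‖w + a - K.starProjection (w + a)‖ ≤ ‖a‖ := by
  have hKa : w + a - K.starProjection (w + a) = Kᗮ.starProjection a := by
    rw [map_add, K.starProjection_eq_self_iff.mpr hw, starProjection_orthogonal_val]
    abel
  rw [hKa]
  exact Kᗮ.norm_starProjection_apply_le a

theorem Submodule.norm_add_sub_starProjection_le_of_mem (V : Submodule ℝ E)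
    {W : Submodule ℝ E} [V.HasOrthogonalProjection] [W.HasOrthogonalProjection]
    {w : E} (hw : w ∈ W) (a : E) :
    ‖w + a - V.starProjection (w + a)‖ ≤
      ‖a‖ + ‖W.starProjection - V.starProjection‖ * ‖w + a‖ := by
  set x := w + a
  calc ‖x - V.starProjection x‖
      = ‖(x - W.starProjection x) + (W.starProjection - V.starProjection) x‖ := by
        rw [sub_apply, sub_add_sub_cancel]
    _ ≤ ‖x - W.starProjection x‖ + ‖(W.starProjection - V.starProjection) x‖ := norm_add_le _ _
    _ ≤ _ := add_le_add (W.norm_add_sub_starProjection_add_le hw a)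
        (ContinuousLinearMap.le_opNorm _ _)

end Projection

/-- `‖y‖ ≥ ‖x‖ - ‖x - y‖ ≥ ‖x‖ / 2 - A` and
`β ‖y‖ - ‖x - y‖ ≥ β ‖x‖ - (1 + β) ‖x - y‖ ≥ β ‖x‖ / 2 - (1 + β) A`. -/
theorem le_norm_and_norm_sub_le_mul_norm_of_norm_sub_le {E : Type*} [SeminormedAddCommGroup E]
    {x y : E} {α β ε A : ℝ} (hβ : 0 ≤ β) (hε : 2 * ε * (1 + β) ≤ β)
    (hxy : ‖x - y‖ ≤ A + ε * ‖x‖) (hα : 2 * (α + A) ≤ ‖x‖) (hA : 2 * (1 + β) * A ≤ β * ‖x‖) :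
    α ≤ ‖y‖ ∧ ‖x - y‖ ≤ β * ‖y‖ := by
  have hy : ‖x‖ - ‖x - y‖ ≤ ‖y‖ := by
    simpa only [sub_sub_cancel] using norm_sub_norm_le x (x - y)
  have hεx : 2 * ε * (1 + β) * ‖x‖ ≤ β * ‖x‖ := mul_le_mul_of_nonneg_right hε (norm_nonneg x)
  constructor <;> nlinarith [norm_nonneg x]

theorem projCL_eq_starProjection {n : ℕ} (W : Submodule ℝ (EuclideanSpace ℝ (Fin n))) :
    projCL W = W.starProjection :=
  rfl

theorem mem_coneK_iff {n : ℕ} {V : Submodule ℝ (EuclideanSpace ℝ (Fin n))} {α β : ℝ}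
    {x : EuclideanSpace ℝ (Fin n)} :
    x ∈ coneK V α β ↔
      α ≤ ‖V.starProjection x‖ ∧ ‖x - V.starProjection x‖ ≤ β * ‖V.starProjection x‖ :=
  Iff.rfl

theorem isBounded_compl_coneK_inter_translate {n : ℕ}
    (V W : Submodule ℝ (EuclideanSpace ℝ (Fin n))) (α : ℝ) {β : ℝ} (hβ : 0 < β)
    (hW : ‖projCL W - projCL V‖ ≤ β / (2 * (1 + β))) (a : EuclideanSpace ℝ (Fin n)) :
    Bornology.IsBounded ((coneK V α β)ᶜ ∩ ((fun w => w + a) '' (W : Set _))) := by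
  refine (isBounded_closedBall (x := 0)
    (r := max (2 * (α + ‖a‖)) (2 * (1 + β) * ‖a‖ / β))).subset ?_
  rintro _ ⟨hcone, w, hw, rfl⟩
  rw [mem_closedBall_zero_iff]
  rw [projCL_eq_starProjection, projCL_eq_starProjection, le_div_iff₀ (by positivity)] at hW
  by_contra! hfar
  refine hcone (mem_coneK_iff.mpr (le_norm_and_norm_sub_le_mul_norm_of_norm_sub_le hβ.le
    (by linarith) (V.norm_add_sub_starProjection_le_of_mem hw a) ?_ ?_))
  · exact (le_max_left _ _).trans hfar.le
  · rw [mul_comm β, ← div_le_iff₀ hβ]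
    exact (le_max_right _ _).trans hfar.le

theorem stmt3_general {n k : ℕ}
    (V : Submodule ℝ (EuclideanSpace ℝ (Fin n)))
    (α β : ℝ) (hβ : 0 < β) :
    (∀ a : EuclideanSpace ℝ (Fin n),
      Bornology.IsBounded ((coneK V α β)ᶜ ∩ ((fun w => w + a) '' (V : Set _)))) ∧
    ∃ ε > (0 : ℝ), ∀ W : Submodule ℝ (EuclideanSpace ℝ (Fin n)),
      Module.finrank ℝ W = k → ‖projCL W - projCL V‖ < ε →
      ∀ a : EuclideanSpace ℝ (Fin n),
        Bornology.IsBounded ((coneK V α β)ᶜ ∩ ((fun w => w + a) '' (W : Set _))) := by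
  have hε : 0 < β / (2 * (1 + β)) := by positivity
  refine ⟨fun a => isBounded_compl_coneK_inter_translate V V α hβ ?_ a, _, hε,
    fun W _ hW a => isBounded_compl_coneK_inter_translate V W α hβ hW.le a⟩
  simpa using hε.le

/-- `S_{V,α,β} ∩ (V + a)` is bounded for every `a`, and the same holds
for every `k`-dimensional subspace `W` whose orthogonal projection is close enough
(in operator norm) to that of `V`. -/
theorem stmt3 {n k : ℕ} (hn : 1 ≤ n)
    (V : Submodule ℝ (EuclideanSpace ℝ (Fin n))) (hV : Module.finrank ℝ V = k)
    (α β : ℝ) (hα : 0 < α) (hβ : 0 < β) :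
    (∀ a : EuclideanSpace ℝ (Fin n),
      Bornology.IsBounded ((coneK V α β)ᶜ ∩ ((fun w => w + a) '' (V : Set _)))) ∧
    ∃ ε > (0 : ℝ), ∀ W : Submodule ℝ (EuclideanSpace ℝ (Fin n)),
      Module.finrank ℝ W = k → ‖projCL W - projCL V‖ < ε →
      ∀ a : EuclideanSpace ℝ (Fin n),
        Bornology.IsBounded ((coneK V α β)ᶜ ∩ ((fun w => w + a) '' (W : Set _))) :=
  stmt3_general V α β hβ
end
end

section
/- Let n ≥ 2 and z₀ ∈ S^{2n−1}. Denote by T_{z₀}S^{2n−1} = {v ∈ ℂⁿ : Re⟨v, z₀⟩_{ℂⁿ} = 0} the real tangent space at z₀, by T^ℂ_{z₀}S^{2n−1} = {v ∈ ℂⁿ : ⟨v, z₀⟩_{ℂⁿ} = 0} the complex tangent space, and by Π the orthogonal projection of T_{z₀}S^{2n−1} onto T^ℂ_{z₀}S^{2n−1}. Then there exist an open neighborhood U of z₀ in S^{2n−1} and a map Φ : U → T_{z₀}S^{2n−1} which is a smooth diffeomorphism onto an open subset of T_{z₀}S^{2n−1}, Lipschitz on U, with Φ(z₀) = 0, such that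 for every set E ⊆ S^{2n−1} with H^{2n−2}(E) = 0 one has H^{2n−2}(Π(Φ(𝕋·E ∩ U))) = 0. -/
open MeasureTheory Metric Set
open scoped ENNReal NNReal

noncomputable section

instance {n : ℕ} : MeasurableSpace (EuclideanSpace ℂ (Fin n)) := borel _
instance {n : ℕ} : BorelSpace (EuclideanSpace ℂ (Fin n)) := ⟨rfl⟩

/-- The unit sphere `S^{2n−1} ⊆ ℂⁿ`. -/
def unitSphere (n : ℕ) : Set (EuclideanSpace ℂ (Fin n)) :=
  Metric.sphere 0 1

/-- The real Laplacian (in the `2n` real variables) of `P : ℂⁿ → ℂ` at `z`, computed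
with respect to the orthonormal real basis `e_j, i·e_j`. -/
def cplxLaplacian {n : ℕ} (P : EuclideanSpace ℂ (Fin n) → ℂ)
    (z : EuclideanSpace ℂ (Fin n)) : ℂ :=
  ∑ j : Fin n,
    (fderiv ℝ (fun w => fderiv ℝ P w (EuclideanSpace.single j 1)) z
        (EuclideanSpace.single j 1) +
      fderiv ℝ (fun w => fderiv ℝ P w (Complex.I • EuclideanSpace.single j 1)) z
        (Complex.I • EuclideanSpace.single j 1))

/-- `P : ℂⁿ → ℂ` is (the extension of) an element of `H(p,q)`: smooth, harmonic in the
`2n` real variables, and `(p,q)`-homogeneous: `P(λz) = λᵖ (conj λ)^q P(z)`. -/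
def MemHpq (n p q : ℕ) (P : EuclideanSpace ℂ (Fin n) → ℂ) : Prop :=
  ContDiff ℝ (⊤ : ℕ∞) P ∧ (∀ z, cplxLaplacian P z = 0) ∧
  ∀ (c : ℂ) (z : EuclideanSpace ℂ (Fin n)),
    P (c • z) = c ^ p * (starRingEnd ℂ c) ^ q * P z

/-- `π_{p,q}μ = 0` for the complex measure `μ = f·ν` on the sphere:
`∫ conj(h) dμ = 0` for every `h ∈ H(p,q)`. -/
def projPQZero {n : ℕ} (ν : Measure (EuclideanSpace ℂ (Fin n)))
    (f : EuclideanSpace ℂ (Fin n) → ℂ) (p q : ℕ) : Prop :=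
  ∀ P : EuclideanSpace ℂ (Fin n) → ℂ, MemHpq n p q P →
    ∫ z, (starRingEnd ℂ) (P z) * f z ∂ν = 0

/-- `(p,q) ∈ κ(ε) = {(x,y) ∈ (0,∞)² : 1−ε < y/x < 1/(1−ε)}`. -/
def memKappa (ε : ℝ) (p q : ℕ) : Prop :=
  0 < p ∧ 0 < q ∧ 1 - ε < (q : ℝ) / p ∧ (q : ℝ) / p < 1 / (1 - ε)

/-- The circle orbit `𝕋·E = {e^{it} z : z ∈ E, t ∈ ℝ}`. -/
def circleOrbit {n : ℕ} (E : Set (EuclideanSpace ℂ (Fin n))) :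
    Set (EuclideanSpace ℂ (Fin n)) :=
  {w | ∃ z ∈ E, ∃ t : ℝ, w = Complex.exp (t * Complex.I) • z}

/-- The orthogonal projection of the real tangent space `T_{z₀}S^{2n−1}` onto the
complex tangent space `T^ℂ_{z₀}S^{2n−1}`, given by `v ↦ v − ⟨z₀,v⟩·z₀` (Hermitian
inner product, linear in the second variable). -/
def complexTangentProj {n : ℕ} (z₀ : EuclideanSpace ℂ (Fin n)) :
    EuclideanSpace ℂ (Fin n) → EuclideanSpace ℂ (Fin n) :=
  fun v => v - (inner ℂ z₀ v : ℂ) • z₀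

/-- The real tangent space `T_{z₀}S^{2n−1} = {v : Re⟨v,z₀⟩ = 0}`, as a set. -/
def realTangent {n : ℕ} (z₀ : EuclideanSpace ℂ (Fin n)) :
    Set (EuclideanSpace ℂ (Fin n)) :=
  {v | (inner ℂ z₀ v : ℂ).re = 0}

/-!
Write `u = ⟪z₀, z⟫` and `Π z = z - u z₀`, and take the chart `Φ z = i (Im u) z₀ + (conj u) Π z`,
which maps into the real tangent space. Its complex-tangential part `Π (Φ z) = (conj u) Π z`
satisfies `Π (Φ (c z)) = |c|² Π (Φ z)`, so it is constant on circle orbits and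
`Π (Φ (𝕋·E ∩ U)) ⊆ (Π ∘ Φ) E`, which is `H^{2n-2}`-null because the smooth map `Π ∘ Φ` is
Lipschitz on the compact sphere.
On the sphere `‖Π (Φ z)‖² = |u|² (1 - |u|²)` and `Im ⟪z₀, Φ z⟫ = Im u`, so near `z₀`, where
`|u|² > 1/2` and `Re u > 0`, one recovers `u` and then `z = u z₀ + Π z` from `Φ z`.
-/

open scoped InnerProductSpace ComplexConjugate ContDiff

lemma ContDiff.exists_lipschitzOnWith_of_isCompact {E F : Type*} [NormedAddCommGroup E]
    [NormedSpace ℝ E] [NormedAddCommGroup F] [NormedSpace ℝ F] {f : E → F} (hf : ContDiff ℝ 1 f)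
    {s : Set E} (hs : IsCompact s) : ∃ K, LipschitzOnWith K f s :=
  hf.locallyLipschitz.locallyLipschitzOn.exists_lipschitzOnWith_of_compact hs

lemma LipschitzOnWith.hausdorffMeasure_image_null {X Y : Type*} [EMetricSpace X]
    [MeasurableSpace X] [BorelSpace X] [EMetricSpace Y] [MeasurableSpace Y] [BorelSpace Y]
    {K : ℝ≥0} {f : X → Y} {s : Set X} (h : LipschitzOnWith K f s) {d : ℝ} (hd : 0 ≤ d)
    (hs : μH[d] s = 0) : μH[d] (f '' s) = 0 :=
  le_antisymm (by simpa [hs] using h.hausdorffMeasure_image_le hd) zero_le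

section SphereChart

variable {n : ℕ} {z₀ : EuclideanSpace ℂ (Fin n)}

lemma contDiff_inner_left (z₀ : EuclideanSpace ℂ (Fin n)) :
    ContDiff ℝ ω fun z => ⟪z₀, z⟫_ℂ :=
  contDiff_const.inner ℂ contDiff_id

lemma contDiff_complexTangentProj (z₀ : EuclideanSpace ℂ (Fin n)) :
    ContDiff ℝ ω (complexTangentProj z₀) :=
  contDiff_id.sub ((contDiff_inner_left z₀).smul contDiff_const)

lemma inner_smul_add_complexTangentProj (z₀ v : EuclideanSpace ℂ (Fin n)) :
    ⟪z₀, v⟫_ℂ • z₀ + complexTangentProj z₀ v = v :=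
  add_sub_cancel _ _

lemma complexTangentProj_smul (c : ℂ) (v : EuclideanSpace ℂ (Fin n)) :
    complexTangentProj z₀ (c • v) = c • complexTangentProj z₀ v := by
  simp only [complexTangentProj, inner_smul_right, smul_sub, smul_smul]

lemma inner_complexTangentProj (hz₀ : ‖z₀‖ = 1) (v : EuclideanSpace ℂ (Fin n)) :
    ⟪z₀, complexTangentProj z₀ v⟫_ℂ = 0 := by
  simp [complexTangentProj, hz₀]

lemma inner_smul_self_add (hz₀ : ‖z₀‖ = 1) (c : ℂ) {w : EuclideanSpace ℂ (Fin n)}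
    (hw : ⟪z₀, w⟫_ℂ = 0) : ⟪z₀, c • z₀ + w⟫_ℂ = c := by
  simp [hz₀, hw]

lemma complexTangentProj_smul_self_add (hz₀ : ‖z₀‖ = 1) (c : ℂ) {w : EuclideanSpace ℂ (Fin n)}
    (hw : ⟪z₀, w⟫_ℂ = 0) : complexTangentProj z₀ (c • z₀ + w) = w := by
  rw [complexTangentProj, inner_smul_self_add hz₀ c hw, add_sub_cancel_left]

lemma norm_sq_complexTangentProj (hz₀ : ‖z₀‖ = 1) (v : EuclideanSpace ℂ (Fin n)) :
    ‖complexTangentProj z₀ v‖ ^ 2 = ‖v‖ ^ 2 - ‖⟪z₀, v⟫_ℂ‖ ^ 2 := by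
  have h := norm_add_sq_eq_norm_sq_add_norm_sq_of_inner_eq_zero (⟪z₀, v⟫_ℂ • z₀)
    (complexTangentProj z₀ v) (by rw [inner_smul_left, inner_complexTangentProj hz₀, mul_zero])
  rw [inner_smul_add_complexTangentProj, norm_smul, hz₀] at h
  linear_combination -h

def sphereChart (z₀ z : EuclideanSpace ℂ (Fin n)) : EuclideanSpace ℂ (Fin n) :=
  (((⟪z₀, z⟫_ℂ).im : ℂ) * Complex.I) • z₀ + conj ⟪z₀, z⟫_ℂ • complexTangentProj z₀ z

lemma contDiff_sphereChart (z₀ : EuclideanSpace ℂ (Fin n)) : ContDiff ℝ ω (sphereChart z₀) := by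
  have hu := contDiff_inner_left z₀
  have him : ContDiff ℝ ω fun z => ((⟪z₀, z⟫_ℂ).im : ℂ) :=
    Complex.ofRealCLM.contDiff.comp (Complex.imCLM.contDiff.comp hu)
  have hconj : ContDiff ℝ ω fun z => conj ⟪z₀, z⟫_ℂ := Complex.conjCLE.contDiff.comp hu
  exact ((him.mul contDiff_const).smul contDiff_const).add
    (hconj.smul (contDiff_complexTangentProj z₀))

lemma inner_conj_smul_complexTangentProj (hz₀ : ‖z₀‖ = 1) (z : EuclideanSpace ℂ (Fin n)) :
    ⟪z₀, conj ⟪z₀, z⟫_ℂ • complexTangentProj z₀ z⟫_ℂ = 0 := by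
  rw [inner_smul_right, inner_complexTangentProj hz₀, mul_zero]

lemma inner_sphereChart (hz₀ : ‖z₀‖ = 1) (z : EuclideanSpace ℂ (Fin n)) :
    ⟪z₀, sphereChart z₀ z⟫_ℂ = ((⟪z₀, z⟫_ℂ).im : ℂ) * Complex.I :=
  inner_smul_self_add hz₀ _ (inner_conj_smul_complexTangentProj hz₀ z)

lemma complexTangentProj_sphereChart (hz₀ : ‖z₀‖ = 1) (z : EuclideanSpace ℂ (Fin n)) :
    complexTangentProj z₀ (sphereChart z₀ z) = conj ⟪z₀, z⟫_ℂ • complexTangentProj z₀ z :=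
  complexTangentProj_smul_self_add hz₀ _ (inner_conj_smul_complexTangentProj hz₀ z)

lemma sphereChart_mem_realTangent (hz₀ : ‖z₀‖ = 1) (z : EuclideanSpace ℂ (Fin n)) :
    sphereChart z₀ z ∈ realTangent z₀ := by
  simp [realTangent, inner_sphereChart hz₀]

lemma sphereChart_self (hz₀ : ‖z₀‖ = 1) : sphereChart z₀ z₀ = 0 := by
  simp [sphereChart, complexTangentProj, hz₀]

lemma complexTangentProj_sphereChart_smul (hz₀ : ‖z₀‖ = 1) (c : ℂ)
    (z : EuclideanSpace ℂ (Fin n)) :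
    complexTangentProj z₀ (sphereChart z₀ (c • z)) =
      (Complex.normSq c : ℂ) • complexTangentProj z₀ (sphereChart z₀ z) := by
  simp only [complexTangentProj_sphereChart hz₀, complexTangentProj_smul, inner_smul_right,
    map_mul, smul_smul, Complex.normSq_eq_conj_mul_self]
  congr 1
  ring

lemma norm_sq_complexTangentProj_sphereChart (hz₀ : ‖z₀‖ = 1) {z : EuclideanSpace ℂ (Fin n)}
    (hz : ‖z‖ = 1) :
    ‖complexTangentProj z₀ (sphereChart z₀ z)‖ ^ 2 =
      ‖⟪z₀, z⟫_ℂ‖ ^ 2 * (1 - ‖⟪z₀, z⟫_ℂ‖ ^ 2) := by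
  rw [complexTangentProj_sphereChart hz₀, norm_smul, mul_pow, Complex.norm_conj,
    norm_sq_complexTangentProj hz₀, hz, one_pow]

lemma image_complexTangentProj_image_sphereChart_circleOrbit_subset (hz₀ : ‖z₀‖ = 1)
    (E s : Set (EuclideanSpace ℂ (Fin n))) :
    complexTangentProj z₀ '' (sphereChart z₀ '' (circleOrbit E ∩ s)) ⊆
      (complexTangentProj z₀ ∘ sphereChart z₀) '' E := by
  rintro _ ⟨_, ⟨_, ⟨⟨z, hzE, t, rfl⟩, -⟩, rfl⟩, rfl⟩
  refine ⟨z, hzE, ?_⟩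
  rw [Function.comp_apply, complexTangentProj_sphereChart_smul hz₀, Complex.normSq_eq_norm_sq,
    Complex.norm_exp_ofReal_mul_I, one_pow, Complex.ofReal_one, one_smul]

/-- The root `τ ≥ 1/2` of `τ (1 - τ) = ‖Π v‖²`; for `v = sphereChart z₀ z` with `z` on the sphere
it recovers `τ = ‖⟪z₀, z⟫‖²`. -/
def sphereChartInvNormSq (z₀ v : EuclideanSpace ℂ (Fin n)) : ℝ :=
  (1 + √(1 - 4 * ‖complexTangentProj z₀ v‖ ^ 2)) / 2

def sphereChartInvCoeff (z₀ v : EuclideanSpace ℂ (Fin n)) : ℂ :=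
  (√(sphereChartInvNormSq z₀ v - (⟪z₀, v⟫_ℂ).im ^ 2) : ℂ) + ((⟪z₀, v⟫_ℂ).im : ℂ) * Complex.I

def sphereChartInv (z₀ v : EuclideanSpace ℂ (Fin n)) : EuclideanSpace ℂ (Fin n) :=
  sphereChartInvCoeff z₀ v • z₀ + (conj (sphereChartInvCoeff z₀ v))⁻¹ • complexTangentProj z₀ v

def sphereChartTarget (z₀ : EuclideanSpace ℂ (Fin n)) : Set (EuclideanSpace ℂ (Fin n)) :=
  {v | ‖complexTangentProj z₀ v‖ ^ 2 < 1 / 16 ∧ (⟪z₀, v⟫_ℂ).im ^ 2 < 1 / 16}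

def sphereChartSource (z₀ : EuclideanSpace ℂ (Fin n)) : Set (EuclideanSpace ℂ (Fin n)) :=
  {z | 1 / 2 < (⟪z₀, z⟫_ℂ).re} ∩ sphereChart z₀ ⁻¹' sphereChartTarget z₀

lemma sphereChartInvNormSq_eq {v : EuclideanSpace ℂ (Fin n)} {τ : ℝ} (hτ : 1 / 2 ≤ τ)
    (hv : ‖complexTangentProj z₀ v‖ ^ 2 = τ * (1 - τ)) : sphereChartInvNormSq z₀ v = τ := by
  rw [sphereChartInvNormSq, hv, show 1 - 4 * (τ * (1 - τ)) = (2 * τ - 1) ^ 2 by ring,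
    Real.sqrt_sq (by linarith)]
  ring

lemma sphereChartInvNormSq_mul_one_sub {v : EuclideanSpace ℂ (Fin n)}
    (hv : ‖complexTangentProj z₀ v‖ ^ 2 ≤ 1 / 4) :
    sphereChartInvNormSq z₀ v * (1 - sphereChartInvNormSq z₀ v) =
      ‖complexTangentProj z₀ v‖ ^ 2 := by
  have h := Real.sq_sqrt (show 0 ≤ 1 - 4 * ‖complexTangentProj z₀ v‖ ^ 2 by linarith)
  rw [sphereChartInvNormSq]
  linear_combination -h / 4

lemma three_quarters_lt_sphereChartInvNormSq {v : EuclideanSpace ℂ (Fin n)}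
    (hv : ‖complexTangentProj z₀ v‖ ^ 2 < 1 / 16) : 3 / 4 < sphereChartInvNormSq z₀ v := by
  have h := Real.sq_sqrt (show 0 ≤ 1 - 4 * ‖complexTangentProj z₀ v‖ ^ 2 by linarith)
  have h0 := Real.sqrt_nonneg (1 - 4 * ‖complexTangentProj z₀ v‖ ^ 2)
  rw [sphereChartInvNormSq]
  nlinarith

@[simp]
lemma re_sphereChartInvCoeff (v : EuclideanSpace ℂ (Fin n)) :
    (sphereChartInvCoeff z₀ v).re = √(sphereChartInvNormSq z₀ v - (⟪z₀, v⟫_ℂ).im ^ 2) := by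
  simp [sphereChartInvCoeff]

@[simp]
lemma im_sphereChartInvCoeff (v : EuclideanSpace ℂ (Fin n)) :
    (sphereChartInvCoeff z₀ v).im = (⟪z₀, v⟫_ℂ).im := by
  simp [sphereChartInvCoeff]

lemma norm_sq_sphereChartInvCoeff {v : EuclideanSpace ℂ (Fin n)}
    (hv : (⟪z₀, v⟫_ℂ).im ^ 2 ≤ sphereChartInvNormSq z₀ v) :
    ‖sphereChartInvCoeff z₀ v‖ ^ 2 = sphereChartInvNormSq z₀ v := by
  rw [← Complex.normSq_eq_norm_sq, Complex.normSq_apply, re_sphereChartInvCoeff,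
    im_sphereChartInvCoeff, Real.mul_self_sqrt (by linarith)]
  ring

lemma one_half_lt_re_sphereChartInvCoeff {v : EuclideanSpace ℂ (Fin n)}
    (hv : v ∈ sphereChartTarget z₀) : 1 / 2 < (sphereChartInvCoeff z₀ v).re := by
  have ht := three_quarters_lt_sphereChartInvNormSq hv.1
  rw [re_sphereChartInvCoeff, show (1 / 2 : ℝ) = √(1 / 4) by
    rw [show (1 / 4 : ℝ) = (1 / 2) ^ 2 by norm_num, Real.sqrt_sq (by norm_num)]]
  exact Real.sqrt_lt_sqrt (by norm_num) (by linarith [hv.2])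

lemma sphereChartInvCoeff_ne_zero {v : EuclideanSpace ℂ (Fin n)}
    (hv : v ∈ sphereChartTarget z₀) : sphereChartInvCoeff z₀ v ≠ 0 := fun h => by
  have := one_half_lt_re_sphereChartInvCoeff hv
  rw [h, Complex.zero_re] at this
  linarith

lemma sphereChartInvCoeff_sphereChart (hz₀ : ‖z₀‖ = 1) {z : EuclideanSpace ℂ (Fin n)}
    (hz : ‖z‖ = 1) (hτ : 1 / 2 ≤ ‖⟪z₀, z⟫_ℂ‖ ^ 2) (hre : 0 ≤ (⟪z₀, z⟫_ℂ).re) :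
    sphereChartInvCoeff z₀ (sphereChart z₀ z) = ⟪z₀, z⟫_ℂ := by
  have him : (⟪z₀, sphereChart z₀ z⟫_ℂ).im = (⟪z₀, z⟫_ℂ).im := by
    simp [inner_sphereChart hz₀]
  have hnormSq : sphereChartInvNormSq z₀ (sphereChart z₀ z) = ‖⟪z₀, z⟫_ℂ‖ ^ 2 :=
    sphereChartInvNormSq_eq hτ (norm_sq_complexTangentProj_sphereChart hz₀ hz)
  apply Complex.ext
  · rw [re_sphereChartInvCoeff, hnormSq, him, ← Complex.normSq_eq_norm_sq, Complex.normSq_apply,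
      show ∀ a b : ℝ, a * a + b * b - b ^ 2 = a ^ 2 by intros; ring, Real.sqrt_sq hre]
  · rw [im_sphereChartInvCoeff, him]

lemma one_half_le_norm_sq_inner_of_mem_sphereChartSource (hz₀ : ‖z₀‖ = 1)
    {z : EuclideanSpace ℂ (Fin n)} (hz : z ∈ sphereChartSource z₀ ∩ unitSphere n) :
    1 / 2 ≤ ‖⟪z₀, z⟫_ℂ‖ ^ 2 := by
  obtain ⟨⟨hre, hm, -⟩, hzS⟩ := hz
  replace hre : 1 / 2 < (⟪z₀, z⟫_ℂ).re := hre
  rw [norm_sq_complexTangentProj_sphereChart hz₀ (mem_sphere_zero_iff_norm.1 hzS)] at hm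
  have hquarter : 1 / 4 < ‖⟪z₀, z⟫_ℂ‖ ^ 2 := by
    rw [← Complex.normSq_eq_norm_sq, Complex.normSq_apply]
    nlinarith [mul_self_nonneg (⟪z₀, z⟫_ℂ).im]
  nlinarith

lemma leftInvOn_sphereChartInv (hz₀ : ‖z₀‖ = 1) :
    LeftInvOn (sphereChartInv z₀) (sphereChart z₀) (sphereChartSource z₀ ∩ unitSphere n) := by
  intro z hz
  have hre : 0 < (⟪z₀, z⟫_ℂ).re := lt_trans (by norm_num) hz.1.1
  have hu : conj ⟪z₀, z⟫_ℂ ≠ 0 := by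
    rw [map_ne_zero]
    exact fun h => by simp [h] at hre
  rw [sphereChartInv, sphereChartInvCoeff_sphereChart hz₀ (mem_sphere_zero_iff_norm.1 hz.2)
    (one_half_le_norm_sq_inner_of_mem_sphereChartSource hz₀ hz) hre.le,
    complexTangentProj_sphereChart hz₀, smul_smul, inv_mul_cancel₀ hu, one_smul,
    inner_smul_add_complexTangentProj]

lemma inner_conj_inv_smul_complexTangentProj (hz₀ : ‖z₀‖ = 1) (c : ℂ)
    (v : EuclideanSpace ℂ (Fin n)) : ⟪z₀, (conj c)⁻¹ • complexTangentProj z₀ v⟫_ℂ = 0 := by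
  rw [inner_smul_right, inner_complexTangentProj hz₀, mul_zero]

lemma inner_sphereChartInv (hz₀ : ‖z₀‖ = 1) (v : EuclideanSpace ℂ (Fin n)) :
    ⟪z₀, sphereChartInv z₀ v⟫_ℂ = sphereChartInvCoeff z₀ v :=
  inner_smul_self_add hz₀ _ (inner_conj_inv_smul_complexTangentProj hz₀ _ v)

lemma complexTangentProj_sphereChartInv (hz₀ : ‖z₀‖ = 1) (v : EuclideanSpace ℂ (Fin n)) :
    complexTangentProj z₀ (sphereChartInv z₀ v) =
      (conj (sphereChartInvCoeff z₀ v))⁻¹ • complexTangentProj z₀ v :=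
  complexTangentProj_smul_self_add hz₀ _ (inner_conj_inv_smul_complexTangentProj hz₀ _ v)

lemma sphereChart_sphereChartInv (hz₀ : ‖z₀‖ = 1) {v : EuclideanSpace ℂ (Fin n)}
    (hv : v ∈ sphereChartTarget z₀) (hvT : v ∈ realTangent z₀) :
    sphereChart z₀ (sphereChartInv z₀ v) = v := by
  have hinner : (((⟪z₀, v⟫_ℂ).im : ℂ) * Complex.I) = ⟪z₀, v⟫_ℂ :=
    Complex.ext (by simpa using hvT.symm) (by simp)
  have hc : conj (sphereChartInvCoeff z₀ v) ≠ 0 :=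
    (map_ne_zero _).2 (sphereChartInvCoeff_ne_zero hv)
  rw [sphereChart, inner_sphereChartInv hz₀, complexTangentProj_sphereChartInv hz₀, smul_smul,
    mul_inv_cancel₀ hc, one_smul, im_sphereChartInvCoeff, hinner,
    inner_smul_add_complexTangentProj]

lemma norm_sphereChartInv (hz₀ : ‖z₀‖ = 1) {v : EuclideanSpace ℂ (Fin n)}
    (hv : v ∈ sphereChartTarget z₀) : ‖sphereChartInv z₀ v‖ = 1 := by
  set t := sphereChartInvNormSq z₀ v
  have ht := three_quarters_lt_sphereChartInvNormSq hv.1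
  have hcoeff : ‖sphereChartInvCoeff z₀ v‖ ^ 2 = t :=
    norm_sq_sphereChartInvCoeff (by linarith [hv.2])
  have hroot : t * (1 - t) = ‖complexTangentProj z₀ v‖ ^ 2 :=
    sphereChartInvNormSq_mul_one_sub (by linarith [hv.1])
  have hsq := norm_sq_complexTangentProj hz₀ (sphereChartInv z₀ v)
  rw [complexTangentProj_sphereChartInv hz₀, inner_sphereChartInv hz₀, norm_smul, mul_pow,
    norm_inv, Complex.norm_conj, inv_pow, hcoeff, ← hroot, inv_mul_cancel_left₀ (by linarith)]
    at hsq
  exact (pow_eq_one_iff_of_nonneg (norm_nonneg _) two_ne_zero).1 (by linarith)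

lemma mapsTo_sphereChartInv (hz₀ : ‖z₀‖ = 1) :
    MapsTo (sphereChartInv z₀) (sphereChartTarget z₀ ∩ realTangent z₀)
      (sphereChartSource z₀ ∩ unitSphere n) := by
  rintro v ⟨hv, hvT⟩
  refine ⟨⟨?_, ?_⟩, mem_sphere_zero_iff_norm.2 (norm_sphereChartInv hz₀ hv)⟩
  · show 1 / 2 < (⟪z₀, sphereChartInv z₀ v⟫_ℂ).re
    rw [inner_sphereChartInv hz₀]
    exact one_half_lt_re_sphereChartInvCoeff hv
  · show sphereChart z₀ (sphereChartInv z₀ v) ∈ sphereChartTarget z₀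
    rwa [sphereChart_sphereChartInv hz₀ hv hvT]

lemma invOn_sphereChartInv (hz₀ : ‖z₀‖ = 1) :
    InvOn (sphereChartInv z₀) (sphereChart z₀) (sphereChartSource z₀ ∩ unitSphere n)
      (sphereChartTarget z₀ ∩ realTangent z₀) :=
  ⟨leftInvOn_sphereChartInv hz₀, fun _ hv => sphereChart_sphereChartInv hz₀ hv.1 hv.2⟩

lemma bijOn_sphereChart (hz₀ : ‖z₀‖ = 1) :
    BijOn (sphereChart z₀) (sphereChartSource z₀ ∩ unitSphere n)
      (sphereChartTarget z₀ ∩ realTangent z₀) :=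
  (invOn_sphereChartInv hz₀).bijOn (fun z hz => ⟨hz.1.2, sphereChart_mem_realTangent hz₀ z⟩)
    (mapsTo_sphereChartInv hz₀)

lemma contDiffAt_sphereChartInv {v : EuclideanSpace ℂ (Fin n)} (hv : v ∈ sphereChartTarget z₀) :
    ContDiffAt ℝ ω (sphereChartInv z₀) v := by
  have hproj := contDiff_complexTangentProj z₀
  have him : ContDiff ℝ ω fun v => (⟪z₀, v⟫_ℂ).im :=
    Complex.imCLM.contDiff.comp (contDiff_inner_left z₀)
  have hnormSq : ContDiffAt ℝ ω (sphereChartInvNormSq z₀) v := by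
    have hm : ContDiff ℝ ω fun v => ‖complexTangentProj z₀ v‖ ^ 2 :=
      (contDiff_norm_sq ℂ).comp hproj
    exact (contDiffAt_const.add ((contDiffAt_const.sub (contDiffAt_const.mul hm.contDiffAt)).sqrt
      (by linarith [hv.1]))).div_const 2
  have hsqrt : ContDiffAt ℝ ω (fun v => √(sphereChartInvNormSq z₀ v - (⟪z₀, v⟫_ℂ).im ^ 2)) v :=
    (hnormSq.sub (him.contDiffAt.pow 2)).sqrt
      (by linarith [three_quarters_lt_sphereChartInvNormSq hv.1, hv.2])
  have hcoeff : ContDiffAt ℝ ω (sphereChartInvCoeff z₀) v :=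
    (Complex.ofRealCLM.contDiff.contDiffAt.comp v hsqrt).add
      ((Complex.ofRealCLM.contDiff.contDiffAt.comp v him.contDiffAt).mul contDiffAt_const)
  exact (hcoeff.smul contDiffAt_const).add
    (((Complex.conjCLE.contDiff.contDiffAt.comp v hcoeff).inv
      (by simpa using sphereChartInvCoeff_ne_zero hv)).smul hproj.contDiffAt)

lemma isOpen_sphereChartTarget (z₀ : EuclideanSpace ℂ (Fin n)) :
    IsOpen (sphereChartTarget z₀) :=
  (isOpen_lt ((contDiff_complexTangentProj z₀).continuous.norm.pow 2) continuous_const).inter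
    (isOpen_lt ((Complex.continuous_im.comp (contDiff_inner_left z₀).continuous).pow 2)
      continuous_const)

lemma contDiffOn_sphereChartInv (z₀ : EuclideanSpace ℂ (Fin n)) :
    ContDiffOn ℝ ω (sphereChartInv z₀) (sphereChartTarget z₀) :=
  fun _ hv => (contDiffAt_sphereChartInv hv).contDiffWithinAt

lemma isOpen_sphereChartSource (z₀ : EuclideanSpace ℂ (Fin n)) :
    IsOpen (sphereChartSource z₀) :=
  (isOpen_lt continuous_const
      (Complex.continuous_re.comp (contDiff_inner_left z₀).continuous)).inter
    ((isOpen_sphereChartTarget z₀).preimage (contDiff_sphereChart z₀).continuous)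

lemma self_mem_sphereChartSource (hz₀ : ‖z₀‖ = 1) : z₀ ∈ sphereChartSource z₀ := by
  refine ⟨?_, ?_⟩
  · show 1 / 2 < (⟪z₀, z₀⟫_ℂ).re
    norm_num [hz₀]
  · show sphereChart z₀ z₀ ∈ sphereChartTarget z₀
    simp [sphereChart_self hz₀, sphereChartTarget, complexTangentProj]

lemma one_le_of_mem_unitSphere {z : EuclideanSpace ℂ (Fin n)} (hz : z ∈ unitSphere n) : 1 ≤ n := by
  rcases Nat.eq_zero_or_pos n with rfl | hn
  · simp [unitSphere, Subsingleton.elim z 0] at hz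
  · exact hn

end SphereChart

theorem stmt13_general {n : ℕ}
    (z₀ : EuclideanSpace ℂ (Fin n)) (hz₀ : z₀ ∈ unitSphere n) :
    ∃ (U' W : Set (EuclideanSpace ℂ (Fin n)))
      (Φ Ψ : EuclideanSpace ℂ (Fin n) → EuclideanSpace ℂ (Fin n)) (K : ℝ≥0),
      IsOpen U' ∧ z₀ ∈ U' ∧ IsOpen W ∧
      ContDiffOn ℝ (⊤ : ℕ∞) Φ U' ∧
      Φ z₀ = 0 ∧
      Set.InjOn Φ (U' ∩ unitSphere n) ∧
      Φ '' (U' ∩ unitSphere n) = W ∩ realTangent z₀ ∧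
      ContDiffOn ℝ (⊤ : ℕ∞) Ψ W ∧
      (∀ z ∈ U' ∩ unitSphere n, Ψ (Φ z) = z) ∧
      LipschitzOnWith K Φ (U' ∩ unitSphere n) ∧
      ∀ E ⊆ unitSphere n, μH[2 * (n : ℝ) - 2] E = 0 →
        μH[2 * (n : ℝ) - 2]
          (complexTangentProj z₀ '' (Φ '' (circleOrbit E ∩ (U' ∩ unitSphere n)))) = 0 := by
  have hz₀' : ‖z₀‖ = 1 := mem_sphere_zero_iff_norm.1 hz₀
  have hΦ := contDiff_sphereChart z₀
  obtain ⟨K, hK⟩ := (hΦ.of_le le_top).exists_lipschitzOnWith_of_isCompact (isCompact_sphere 0 1)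
  obtain ⟨K', hK'⟩ := (((contDiff_complexTangentProj z₀).comp hΦ).of_le le_top
    |>.exists_lipschitzOnWith_of_isCompact (isCompact_sphere 0 1))
  have hd : 0 ≤ 2 * (n : ℝ) - 2 := by
    have : (1 : ℝ) ≤ n := by exact_mod_cast one_le_of_mem_unitSphere hz₀
    linarith
  have hbij := bijOn_sphereChart hz₀'
  refine ⟨sphereChartSource z₀, sphereChartTarget z₀, sphereChart z₀, sphereChartInv z₀, K,
    isOpen_sphereChartSource z₀, self_mem_sphereChartSource hz₀', isOpen_sphereChartTarget z₀,
    hΦ.contDiffOn.of_le le_top, sphereChart_self hz₀', hbij.injOn, hbij.image_eq,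
    (contDiffOn_sphereChartInv z₀).of_le le_top, leftInvOn_sphereChartInv hz₀',
    hK.mono inter_subset_right, fun E hE hE0 => ?_⟩
  exact measure_mono_null (image_complexTangentProj_image_sphereChart_circleOrbit_subset hz₀' E _)
    ((hK'.mono hE).hausdorffMeasure_image_null hd hE0)

/-- near any `z₀ ∈ S^{2n−1}` there is a Lipschitz smooth diffeomorphism
`Φ` of a neighbourhood `U` of `z₀` in the sphere onto a relatively open subset of the
tangent space, with `Φ(z₀) = 0`, flattening the `𝕋`-orbits: projecting `Φ(𝕋·E ∩ U)`
to the complex tangent space preserves `H^{2n−2}`-nullity. -/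
theorem stmt13 {n : ℕ} (hn : 2 ≤ n)
    (z₀ : EuclideanSpace ℂ (Fin n)) (hz₀ : z₀ ∈ unitSphere n) :
    ∃ (U' W : Set (EuclideanSpace ℂ (Fin n)))
      (Φ Ψ : EuclideanSpace ℂ (Fin n) → EuclideanSpace ℂ (Fin n)) (K : ℝ≥0),
      IsOpen U' ∧ z₀ ∈ U' ∧ IsOpen W ∧
      ContDiffOn ℝ (⊤ : ℕ∞) Φ U' ∧
      Φ z₀ = 0 ∧
      Set.InjOn Φ (U' ∩ unitSphere n) ∧
      Φ '' (U' ∩ unitSphere n) = W ∩ realTangent z₀ ∧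
      ContDiffOn ℝ (⊤ : ℕ∞) Ψ W ∧
      (∀ z ∈ U' ∩ unitSphere n, Ψ (Φ z) = z) ∧
      LipschitzOnWith K Φ (U' ∩ unitSphere n) ∧
      ∀ E ⊆ unitSphere n, μH[2 * (n : ℝ) - 2] E = 0 →
        μH[2 * (n : ℝ) - 2]
          (complexTangentProj z₀ '' (Φ '' (circleOrbit E ∩ (U' ∩ unitSphere n)))) = 0 :=
  stmt13_general z₀ hz₀
end
end
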